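/- Let x > 0. If the initial guess y_0 satisfies 0 < y_0 < √3/√x, then all Newton iterates y_{n+1} = y_n(3/2 - x y_n²/2) remain positive and the sequence converges to 1/√x. -/

import Mathlib

/-!
Rescaling by `√x` turns the iteration into `z ↦ z (3 - z²) / 2`, which maps `(0, √3)` into
`(0, 1]` because `1 - z (3 - z²) / 2 = (1 - z)² (z + 2) / 2`, and is increasing on `(0, 1]` since
`z (3 - z²) / 2 - z = z (1 - z²) / 2`. From the first step on, the rescaled iterates thus increase
in `(0, 1]`; their limit is a positive fixed point, and the only one is `1`.
-/

open Filter Topology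

/-- One Newton step for the root `1 / √x` of `y ↦ y⁻² - x`. -/
noncomputable def newtonInvSqrt (x y : ℝ) : ℝ := y * (3 / 2 - x * y ^ 2 / 2)

lemma sqrt_mul_newtonInvSqrt {x : ℝ} (hx : 0 ≤ x) (y : ℝ) :
    √x * newtonInvSqrt x y = newtonInvSqrt 1 (√x * y) := by
  unfold newtonInvSqrt
  linear_combination (√x * y ^ 3 / 2) * Real.sq_sqrt hx

lemma continuous_newtonInvSqrt_one : Continuous (newtonInvSqrt 1) := by
  unfold newtonInvSqrt
  fun_prop

lemma newtonInvSqrt_one_pos {z : ℝ} (h0 : 0 < z) (h3 : z ^ 2 < 3) : 0 < newtonInvSqrt 1 z := by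
  unfold newtonInvSqrt
  nlinarith

lemma newtonInvSqrt_one_le_one {z : ℝ} (h0 : 0 ≤ z) : newtonInvSqrt 1 z ≤ 1 := by
  have : 1 - newtonInvSqrt 1 z = (1 - z) ^ 2 * (z + 2) / 2 := by unfold newtonInvSqrt; ring
  nlinarith [sq_nonneg (1 - z)]

lemma le_newtonInvSqrt_one {z : ℝ} (h0 : 0 ≤ z) (h1 : z ≤ 1) : z ≤ newtonInvSqrt 1 z := by
  unfold newtonInvSqrt
  nlinarith

lemma newtonInvSqrt_one_eq_self_iff {z : ℝ} (h0 : 0 < z) : newtonInvSqrt 1 z = z ↔ z = 1 := by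
  constructor
  · intro h
    unfold newtonInvSqrt at h
    have : z * ((z - 1) * (z + 1)) = 0 := by linarith
    rcases mul_eq_zero.mp this with h | h
    · linarith
    rcases mul_eq_zero.mp h with h | h <;> linarith
  · rintro rfl
    norm_num [newtonInvSqrt]

lemma monotone_and_tendsto_one_of_newtonInvSqrt_one {z : ℕ → ℝ}
    (hz : ∀ n, z (n + 1) = newtonInvSqrt 1 (z n)) (h0 : 0 < z 0) (h1 : z 0 ≤ 1) :
    Monotone z ∧ Tendsto z atTop (𝓝 1) := by
  have hbounds : ∀ n, 0 < z n ∧ z n ≤ 1 := by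
    intro n
    induction n with
    | zero => exact ⟨h0, h1⟩
    | succ n ih =>
      rw [hz n]
      exact ⟨ih.1.trans_le (le_newtonInvSqrt_one ih.1.le ih.2),
        newtonInvSqrt_one_le_one ih.1.le⟩
  have hmono : Monotone z := monotone_nat_of_le_succ fun n =>
    (hz n).symm ▸ le_newtonInvSqrt_one (hbounds n).1.le (hbounds n).2
  have hbdd : BddAbove (Set.range z) := ⟨1, by rintro _ ⟨n, rfl⟩; exact (hbounds n).2⟩
  set L := ⨆ n, z n
  have hL : Tendsto z atTop (𝓝 L) := tendsto_atTop_ciSup hmono hbdd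
  have hLpos : 0 < L := h0.trans_le (le_ciSup hbdd 0)
  have hfix : newtonInvSqrt 1 L = L := by
    refine tendsto_nhds_unique ((continuous_newtonInvSqrt_one.tendsto L).comp hL) ?_
    simpa only [Function.comp_def, ← hz] using (tendsto_add_atTop_iff_nat 1).mpr hL
  exact ⟨hmono, (newtonInvSqrt_one_eq_self_iff hLpos).mp hfix ▸ hL⟩

lemma pos_and_tendsto_one_of_newtonInvSqrt_one {z : ℕ → ℝ}
    (hz : ∀ n, z (n + 1) = newtonInvSqrt 1 (z n)) (h0 : 0 < z 0) (h3 : z 0 ^ 2 < 3) :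
    (∀ n, 0 < z n) ∧ Tendsto z atTop (𝓝 1) := by
  have hz1 : 0 < z 1 := hz 0 ▸ newtonInvSqrt_one_pos h0 h3
  obtain ⟨hmono, hlim⟩ := monotone_and_tendsto_one_of_newtonInvSqrt_one
    (z := fun n => z (n + 1)) (fun n => hz (n + 1)) hz1 (hz 0 ▸ newtonInvSqrt_one_le_one h0.le)
  refine ⟨?_, (tendsto_add_atTop_iff_nat 1).mp hlim⟩
  rintro (_ | n)
  · exact h0
  · exact hz1.trans_le (hmono n.zero_le)

theorem newton_invsqrt_basin_of_attraction (x : ℝ) (hx : 0 < x) (y : ℕ → ℝ)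
    (h0 : 0 < y 0) (h0' : y 0 < Real.sqrt 3 / Real.sqrt x)
    (hrec : ∀ n, y (n + 1) = y n * (3 / 2 - x * (y n) ^ 2 / 2)) :
    (∀ n, 0 < y n) ∧
      Filter.Tendsto y Filter.atTop (nhds (1 / Real.sqrt x)) := by
  have hs : 0 < √x := Real.sqrt_pos.mpr hx
  have hz : ∀ n, √x * y (n + 1) = newtonInvSqrt 1 (√x * y n) := fun n => by
    rw [hrec, ← sqrt_mul_newtonInvSqrt hx.le]
    rfl
  have hz0 : (√x * y 0) ^ 2 < 3 := by
    rw [← Real.lt_sqrt (by positivity), mul_comm, ← lt_div_iff₀ hs]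
    exact h0'
  obtain ⟨hpos, hlim⟩ := pos_and_tendsto_one_of_newtonInvSqrt_one
    (z := fun n => √x * y n) hz (mul_pos hs h0) hz0
  refine ⟨fun n => pos_of_mul_pos_right (hpos n) hs.le, ?_⟩
  have hy : (fun n => √x * y n / √x) = y := funext fun n => mul_div_cancel_left₀ _ hs.ne'
  simpa only [hy] using hlim.div_const √x
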